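/- Let q > 2 be an integer with q ≠ 4. If 8 divides q then Q(cos(2π/q)) = Q(sin(2π/q)); if q ≡ 4 mod 8 then Q(sin(2π/q)) is a subfield of Q(cos(2π/q)) of index two; if 4 does not divide q then Q(cos(2π/q)) is a subfield of Q(sin(2π/q)) of index two. -/

import Mathlib

open Real IntermediateField Polynomial

/-!
Since `sin (2π/q) = cos (π/2 - 2π/q) = cos (2πk/n)` with `k/n = (q - 4)/(4q)` in lowest terms,
and `cos (2πk/n)` and `cos (2π/n)` are Chebyshev polynomials in each other when `k` is prime to
`n`, both fields are of the form `ℚ(cos (2π/n))`. Such a field has degree `φ(n)/2`, because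
`e^{2πi/n}` is a non-real root of `X² - 2 cos (2π/n) X + 1`, and it grows with `n` under
divisibility. The reduced denominator `n` is `q` when `8 ∣ q`, `q/4` or `q/2` when `q ≡ 4 mod 8`,
and `4q` or `2q` when `4 ∤ q`; comparing totients gives the index.
-/

theorem finrank_adjoin_simple_map {F E K : Type*} [Field F] [Field E] [Field K] [Algebra F E]
    [Algebra F K] (f : E →ₐ[F] K) (x : E) :
    Module.finrank F (adjoin F {f x}) = Module.finrank F (adjoin F {x}) := by
  rw [← Set.image_singleton, ← adjoin_map]
  exact (equivMap _ f).toLinearEquiv.finrank_eq.symm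

theorem finrank_extendScalars_of_finrank_eq_mul {F E : Type*} [Field F] [Field E] [Algebra F E]
    {K L : IntermediateField F E} (h : K ≤ L) (hK : 0 < Module.finrank F K) {d : ℕ}
    (hKL : Module.finrank F L = d * Module.finrank F K) :
    Module.finrank K (extendScalars h) = d := by
  rw [← finrank_bot_mul_relfinrank h, relfinrank_eq_finrank_of_le h, mul_comm] at hKL
  exact Nat.eq_of_mul_eq_mul_right hK hKL

theorem finrank_adjoin_simple_eq_two_mul {F E : Type*} [Field F] [Field E] [Algebra F E]
    {K : IntermediateField F E} {ζ a b : E} (hζ : IsIntegral F ζ) (hK : K ≤ adjoin F {ζ})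
    (ha : a ∈ K) (hb : b ∈ K) (hroot : ζ ^ 2 + a * ζ + b = 0) (hζK : ζ ∉ K) :
    Module.finrank F (adjoin F {ζ}) = 2 * Module.finrank F K := by
  have hdeg : (minpoly K ζ).natDegree = 2 := by
    set p : K[X] := X ^ 2 + C ⟨a, ha⟩ * X + C ⟨b, hb⟩
    have hp : p.natDegree = 2 := by unfold p; compute_degree!
    have hpζ : aeval ζ p = 0 := by simpa [p] using hroot
    refine le_antisymm ?_ ((minpoly.two_le_natDegree_iff hζ.tower_top).2 ?_)
    · exact hp ▸ natDegree_le_of_dvd (minpoly.dvd K ζ hpζ) (ne_zero_of_natDegree_gt (hp ▸ two_pos))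
    · rintro ⟨y, rfl⟩
      exact hζK y.2
  rw [← finrank_bot_mul_relfinrank hK, relfinrank_eq_finrank_of_le hK, extendScalars_adjoin,
    adjoin.finrank hζ.tower_top, hdeg, mul_comm]

theorem cos_intCast_mul_mem_adjoin_cos (k : ℤ) (x : ℝ) : cos (k * x) ∈ adjoin ℚ {cos x} := by
  rw [← Chebyshev.T_real_cos, ← Chebyshev.aeval_T (R := ℚ)]
  exact algebra_adjoin_le_adjoin ℚ _ (aeval_mem_adjoin_singleton ℚ _)

theorem adjoin_cos_two_pi_div_le_of_dvd {m n : ℕ} (hn : n ≠ 0) (hmn : m ∣ n) :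
    adjoin ℚ {cos (2 * π / m)} ≤ adjoin ℚ {cos (2 * π / n)} := by
  obtain ⟨c, rfl⟩ := hmn
  have hc : (c : ℝ) ≠ 0 := by exact_mod_cast right_ne_zero_of_mul hn
  rw [adjoin_simple_le_iff]
  convert cos_intCast_mul_mem_adjoin_cos c (2 * π / ↑(m * c)) using 2
  push_cast
  field_simp

theorem adjoin_cos_two_pi_mul_div_eq_of_isCoprime {k : ℤ} {n : ℕ} (hn : n ≠ 0)
    (hk : IsCoprime k n) :
    adjoin ℚ {cos (2 * π * k / n)} = adjoin ℚ {cos (2 * π / n)} := by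
  obtain ⟨a, b, hab⟩ := hk
  have hab' : (a : ℝ) * k + b * n = 1 := by exact_mod_cast hab
  refine le_antisymm ?_ ?_ <;> rw [adjoin_simple_le_iff]
  · rw [show 2 * π * k / n = k * (2 * π / n) by ring]
    exact cos_intCast_mul_mem_adjoin_cos k _
  · have h : a * (2 * π * k / n) + b * (2 * π) = 2 * π / n := by
      rw [← mul_one (2 * π / n), ← hab']
      field_simp
    rw [← h, cos_add_int_mul_two_pi]
    exact cos_intCast_mul_mem_adjoin_cos a _

theorem adjoin_sin_two_pi_div_eq_adjoin_cos {q n : ℕ} {k : ℤ} (hq : q ≠ 0) (hn : n ≠ 0)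
    (hk : 4 * q * k = n * (q - 4)) (hkn : IsCoprime k n) :
    adjoin ℚ {sin (2 * π / q)} = adjoin ℚ {cos (2 * π / n)} := by
  have hk' : (4 * q * k : ℝ) = n * (q - 4) := by exact_mod_cast hk
  rw [← adjoin_cos_two_pi_mul_div_eq_of_isCoprime hn hkn, ← cos_pi_div_two_sub]
  congr 3
  field_simp
  linear_combination -hk'

theorem two_mul_finrank_adjoin_cos_two_pi_div {n : ℕ} (hn : 2 < n) :
    2 * Module.finrank ℚ (adjoin ℚ {cos (2 * π / n)}) = n.totient := by
  set θ := 2 * π / n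
  set ζ : ℂ := Complex.exp (2 * π * Complex.I / n)
  have hζ : IsPrimitiveRoot ζ n := Complex.isPrimitiveRoot_exp n (by omega)
  have hζint : IsIntegral ℚ ζ := (hζ.isIntegral (by omega)).tower_top
  have hζθ : ζ = cos θ + sin θ * Complex.I := by
    rw [Complex.ofReal_cos, Complex.ofReal_sin, ← Complex.exp_mul_I]
    push_cast [θ, ζ]
    ring_nf
  let f : ℝ →ₐ[ℚ] ℂ := (Algebra.ofId ℝ ℂ).restrictScalars ℚ
  have hf : f (cos θ) = cos θ := rfl
  have hroot : ζ ^ 2 + -(2 * f (cos θ)) * ζ + 1 = 0 := by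
    have h1 : (sin θ : ℂ) ^ 2 + (cos θ : ℂ) ^ 2 = 1 := by exact_mod_cast sin_sq_add_cos_sq θ
    rw [hf, hζθ]
    linear_combination -h1 + (sin θ : ℂ) ^ 2 * Complex.I_sq
  have hcos : f (cos θ) ∈ adjoin ℚ {ζ} := by
    have hζ0 : ζ ≠ 0 := hζ.ne_zero (by omega)
    rw [show f (cos θ) = (ζ ^ 2 + 1) / (2 * ζ) by field_simp; linear_combination -hroot]
    have := mem_adjoin_simple_self ℚ ζ
    exact div_mem (add_mem (pow_mem this 2) (one_mem _)) (mul_mem (ofNat_mem _ 2) this)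
  have hζ_not_real : ζ ∉ adjoin ℚ {f (cos θ)} := by
    rw [← Set.image_singleton, ← adjoin_map]
    rintro ⟨y, -, hy⟩
    have hsin : 0 < sin θ := sin_pos_of_pos_of_lt_pi (by positivity) (by
      rw [div_lt_iff₀ (by positivity)]
      nlinarith [pi_pos, (show (3 : ℝ) ≤ n by exact_mod_cast hn)])
    have := congrArg Complex.im hy
    simp [f, hζθ, Complex.sin_ofReal_re] at this
    linarith
  rw [← finrank_adjoin_simple_map f, ← finrank_adjoin_simple_eq_two_mul hζint
    (adjoin_simple_le_iff.2 hcos) (neg_mem (mul_mem (ofNat_mem _ 2) (mem_adjoin_simple_self ℚ _)))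
    (one_mem _) hroot hζ_not_real, adjoin.finrank hζint,
    ← cyclotomic_eq_minpoly_rat hζ (by omega), natDegree_cyclotomic]

theorem exists_finrank_extendScalars_adjoin_cos_eq_two {a b : ℕ} (ha : 2 < a) (hab : a ∣ b)
    (hφ : 2 * a.totient = b.totient) :
    ∃ h : adjoin ℚ {cos (2 * π / a)} ≤ adjoin ℚ {cos (2 * π / b)},
      Module.finrank (adjoin ℚ {cos (2 * π / a)}) (extendScalars h) = 2 := by
  have hφa := Nat.totient_pos.2 (by omega : 0 < a)
  have hb := Nat.le_of_dvd (Nat.totient_pos.1 (by omega)) hab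
  have hA := two_mul_finrank_adjoin_cos_two_pi_div ha
  have hB := two_mul_finrank_adjoin_cos_two_pi_div (by omega : 2 < b)
  exact ⟨adjoin_cos_two_pi_div_le_of_dvd (by omega) hab,
    finrank_extendScalars_of_finrank_eq_mul _ (by omega) (by omega)⟩

theorem Int.isCoprime_sub_two_pow_four_mul {m : ℤ} (hm : Odd m) (j : ℕ) (hj : j ≠ 0) :
    IsCoprime (m - 2 ^ j) (4 * m) := by
  refine IsCoprime.mul_right ?_ ?_
  · rw [show (4 : ℤ) = 2 ^ 2 by norm_num]
    exact (Int.isCoprime_two_right.2 (hm.sub_even (even_two.pow_of_ne_zero hj))).pow_right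
  · have h := ((Int.isCoprime_two_left.2 hm).pow_left (m := j)).neg_left.add_mul_left_left 1
    rwa [neg_add_eq_sub, mul_one] at h

theorem adjoin_sin_eq_adjoin_cos_of_eight_dvd {q : ℕ} (hq : q ≠ 0) (h : 8 ∣ q) :
    adjoin ℚ {sin (2 * π / q)} = adjoin ℚ {cos (2 * π / q)} := by
  obtain ⟨m, rfl⟩ := h
  refine adjoin_sin_two_pi_div_eq_adjoin_cos hq hq (k := 2 * m - 1) (by push_cast; ring) ?_
  have h2 : IsCoprime (2 * (m : ℤ) - 1) 2 := Int.isCoprime_two_right.2 ⟨m - 1, by ring⟩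
  have hm : IsCoprime (2 * (m : ℤ) - 1) m := ⟨-1, 2, by ring⟩
  convert (h2.pow_right (n := 3)).mul_right hm using 1
  push_cast
  ring

theorem exists_adjoin_sin_eq_adjoin_cos_of_mod_eight_eq_four {q : ℕ} (h : q % 8 = 4)
    (hq : q ≠ 4) : ∃ n, 2 < n ∧ n ∣ q ∧ 2 * n.totient = q.totient ∧
      adjoin ℚ {sin (2 * π / q)} = adjoin ℚ {cos (2 * π / n)} := by
  obtain ⟨m, rfl, hm⟩ : ∃ m, q = 4 * m ∧ Odd m := ⟨q / 4, by omega, by rw [Nat.odd_iff]; omega⟩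
  have hφ : (4 * m).totient = 2 * m.totient := by
    rw [show 4 * m = 2 * (2 * m) by ring, Nat.totient_two_mul_of_even (even_two_mul m),
      Nat.totient_two_mul_of_odd hm]
  obtain ⟨t, rfl | rfl⟩ : ∃ t, m = 4 * t + 1 ∨ m = 4 * t + 3 := ⟨m / 4, by omega⟩
  · refine ⟨4 * t + 1, by omega, dvd_mul_left _ _, hφ.symm,
      adjoin_sin_two_pi_div_eq_adjoin_cos (k := t) (by omega) (by omega) (by push_cast; ring)
        ⟨-4, 1, by push_cast; ring⟩⟩
  · refine ⟨2 * (4 * t + 3), by omega, ⟨2, by ring⟩, by rw [hφ, Nat.totient_two_mul_of_odd hm],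
      adjoin_sin_two_pi_div_eq_adjoin_cos (k := 2 * t + 1) (by omega) (by omega)
        (by push_cast; ring) ⟨4 * t + 1, -t, by push_cast; ring⟩⟩

theorem exists_adjoin_sin_eq_adjoin_cos_of_not_four_dvd {q : ℕ} (h : ¬4 ∣ q) (hq : q ≠ 0) :
    ∃ n, q ∣ n ∧ n.totient = 2 * q.totient ∧
      adjoin ℚ {sin (2 * π / q)} = adjoin ℚ {cos (2 * π / n)} := by
  rcases Nat.even_or_odd q with ⟨m, rfl⟩ | hodd
  · have hm : Odd m := by rw [Nat.odd_iff]; omega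
    have hcop := Int.isCoprime_sub_two_pow_four_mul (m := m) (by exact_mod_cast hm) 1 one_ne_zero
    refine ⟨4 * m, ⟨2, by ring⟩, ?_, adjoin_sin_two_pi_div_eq_adjoin_cos (k := (m : ℤ) - 2) hq
      (by omega) (by push_cast; ring) (by simpa using hcop)⟩
    rw [← two_mul, show 4 * m = 2 * (2 * m) by ring, Nat.totient_two_mul_of_even (even_two_mul m)]
  · have hcop := Int.isCoprime_sub_two_pow_four_mul (m := q) (by exact_mod_cast hodd) 2 two_ne_zero
    refine ⟨4 * q, dvd_mul_left _ _, ?_, adjoin_sin_two_pi_div_eq_adjoin_cos (k := (q : ℤ) - 4) hq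
      (by omega) (by push_cast; ring) (by simpa using hcop)⟩
    rw [show 4 * q = 2 * (2 * q) by ring, Nat.totient_two_mul_of_even (even_two_mul q),
      Nat.totient_two_mul_of_odd hodd]

theorem sin_cos_field_containments (q : ℕ) (hq : 2 < q) (hq4 : q ≠ 4) :
    (8 ∣ q → adjoin ℚ {Real.cos (2 * π / q)} = adjoin ℚ {Real.sin (2 * π / q)}) ∧
    (q % 8 = 4 → ∃ h : adjoin ℚ {Real.sin (2 * π / q)} ≤ adjoin ℚ {Real.cos (2 * π / q)},
      Module.finrank (adjoin ℚ {Real.sin (2 * π / q)}) (extendScalars h) = 2) ∧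
    (¬ (4 ∣ q) → ∃ h : adjoin ℚ {Real.cos (2 * π / q)} ≤ adjoin ℚ {Real.sin (2 * π / q)},
      Module.finrank (adjoin ℚ {Real.cos (2 * π / q)}) (extendScalars h) = 2) := by
  refine ⟨fun h8 => (adjoin_sin_eq_adjoin_cos_of_eight_dvd (by omega) h8).symm,
    fun h8 => ?_, fun h4 => ?_⟩
  · obtain ⟨n, hn, hnq, hφ, hsin⟩ := exists_adjoin_sin_eq_adjoin_cos_of_mod_eight_eq_four h8 hq4
    rw [hsin]
    exact exists_finrank_extendScalars_adjoin_cos_eq_two hn hnq hφ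
  · obtain ⟨n, hqn, hφ, hsin⟩ := exists_adjoin_sin_eq_adjoin_cos_of_not_four_dvd h4 (by omega)
    rw [hsin]
    exact exists_finrank_extendScalars_adjoin_cos_eq_two hq hqn hφ.symm
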